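/- Let F be a free group with basis a₁,…,a_m and φ a positive automorphism with each letter appearing in its own image. For a letter x, let pre(x) = { y : y ∈ supp(x) and x ∉ supp(y) }. Then the subgroup of F generated by pre(x) is φ-invariant: φ(⟨pre(x)⟩) ⊆ ⟨pre(x)⟩. -/

import Mathlib

/-!
Membership in `supp` is reachability in the graph with edges `a → b` for `b ∈ σ a`. By
transitivity of reachability, every letter of `σ y` for `y ∈ pre(x)` is again in `pre(x)`, and a
substitution maps the subgroup generated by any set of letters closed in this sense into itself.
-/

namespace FreeGroup

variable {α : Type*}

theorem map_lift_closure_of_le_of_forall_mem {σ : α → List α} {S : Set α}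
    (hS : ∀ y ∈ S, ∀ z ∈ σ y, z ∈ S) :
    (Subgroup.closure (of '' S)).map (lift fun a => ((σ a).map of).prod) ≤
      Subgroup.closure (of '' S) := by
  rw [MonoidHom.map_closure, Subgroup.closure_le]
  rintro _ ⟨_, ⟨y, hy, rfl⟩, rfl⟩
  rw [lift_apply_of, SetLike.mem_coe]
  refine Subgroup.list_prod_mem _ fun g hg => ?_
  obtain ⟨z, hz, rfl⟩ := List.mem_map.mp hg
  exact Subgroup.subset_closure ⟨z, hS y hy z hz, rfl⟩

end FreeGroup

namespace List

variable {α : Type*} (σ : α → List α)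

theorem mem_flatMap_iterate_succ {l : List α} {j : ℕ} {y : α} :
    y ∈ (fun w => w.flatMap σ)^[j + 1] l ↔
      ∃ z ∈ (fun w => w.flatMap σ)^[j] l, y ∈ σ z := by
  rw [Function.iterate_succ_apply', mem_flatMap]

theorem exists_mem_flatMap_iterate_singleton_iff {x y : α} :
    (∃ j, y ∈ (fun w => w.flatMap σ)^[j] [x]) ↔ Relation.ReflTransGen (fun a b => b ∈ σ a) x y := by
  constructor
  · rintro ⟨j, hj⟩
    induction j generalizing y with
    | zero => exact (mem_singleton.mp hj) ▸ .refl
    | succ j ih =>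
      obtain ⟨z, hz, hyz⟩ := (mem_flatMap_iterate_succ σ).mp hj
      exact (ih hz).tail hyz
  · intro h
    induction h with
    | refl => exact ⟨0, mem_singleton_self x⟩
    | tail _ hyz ih =>
      obtain ⟨j, hj⟩ := ih
      exact ⟨j + 1, (mem_flatMap_iterate_succ σ).mpr ⟨_, hj, hyz⟩⟩

end List

theorem stmt_12_general {α : Type*} (σ : α → List α) (x : α) :
    (Subgroup.closure (FreeGroup.of ''
        {y | (∃ j, y ∈ (fun w => w.flatMap σ)^[j] [x]) ∧
          ¬ ∃ j, x ∈ (fun w => w.flatMap σ)^[j] [y]})).map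
      (FreeGroup.lift fun a => ((σ a).map FreeGroup.of).prod) ≤
    Subgroup.closure (FreeGroup.of ''
        {y | (∃ j, y ∈ (fun w => w.flatMap σ)^[j] [x]) ∧
          ¬ ∃ j, x ∈ (fun w => w.flatMap σ)^[j] [y]}) := by
  simp_rw [List.exists_mem_flatMap_iterate_singleton_iff]
  refine FreeGroup.map_lift_closure_of_le_of_forall_mem fun y ⟨hxy, hyx⟩ z hz => ?_
  exact ⟨hxy.tail hz, fun hzx => hyx (hzx.head hz)⟩

/-- For a positive automorphism (substitution `σ`, each letter appearing in its own image),
the subgroup generated by `pre(x) = {y ∈ supp(x) : x ∉ supp(y)}` is `φ`-invariant. -/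
theorem stmt_12 {α : Type*} (σ : α → List α) (hself : ∀ a, a ∈ σ a) (x : α) :
    (Subgroup.closure (FreeGroup.of ''
        {y | (∃ j, y ∈ (fun w => w.flatMap σ)^[j] [x]) ∧
          ¬ ∃ j, x ∈ (fun w => w.flatMap σ)^[j] [y]})).map
      (FreeGroup.lift fun a => ((σ a).map FreeGroup.of).prod) ≤
    Subgroup.closure (FreeGroup.of ''
        {y | (∃ j, y ∈ (fun w => w.flatMap σ)^[j] [x]) ∧
          ¬ ∃ j, x ∈ (fun w => w.flatMap σ)^[j] [y]}) :=
  stmt_12_general σ x
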